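/- Let H > 0 and define the log-modulated fractional kernel K(t) := t^{H−1/2} log(1 + 1/t) / Γ(H + 1/2) for t > 0, and set λ(n) := (∫₀^{1/n} K(r)² dr)^{−1}. Then for all 0 < s ≤ t one has lim_{n→∞} λ(n) ∫₀^{s/n} K((t−s)/n + r) K(r) dr = 2H ∫₀^s (t−s+r)^{H−1/2} r^{H−1/2} dr. -/

import Mathlib

open MeasureTheory Set Filter intervalIntegral

/-- The log-modulated fractional kernel
`K(t) = t^{H−1/2} log(1 + 1/t) / Γ(H+1/2)`. -/
noncomputable def logModKernel (H t : ℝ) : ℝ :=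
  t ^ (H - 1/2) * Real.log (1 + 1/t) / Real.Gamma (H + 1/2)

/-!
Substituting `r = u / n` gives `K(u / n) = n^{1/2-H} u^{H-1/2} log(1 + n/u) / Γ(H + 1/2)`, so
numerator and denominator share the factor `n^{-2H} / Γ(H + 1/2)²` and reduce to integrals of
`(c + u)^{H-1/2} u^{H-1/2} log(1 + n/(c + u)) log(1 + n/u)`, with `c = t - s` over `[0, s]` and
`c = 0` over `[0, 1]`. The slowly varying factor `log(1 + n/u)` is asymptotic to `log n` for each
`u > 0` and bounded by `log n · (1 + log(1 + 1/u))`, whose square is integrable against `u^p` for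
`p > -1`. Dominated convergence after division by `(log n)²` gives the limits
`∫₀^s (t - s + u)^{H-1/2} u^{H-1/2} du` and `∫₀^1 u^{2H-1} du = 1/(2H)`, whose ratio is the claim.
-/

open Real Topology

lemma log_one_add_le_rpow_div {y ε : ℝ} (hy : 0 ≤ y) (hε : 0 < ε) (hε₁ : ε ≤ 1) :
    log (1 + y) ≤ y ^ ε / ε := by
  have hsub : (1 + y) ^ ε ≤ 1 + y ^ ε := by
    simpa using rpow_add_le_add_rpow zero_le_one hy hε.le hε₁
  rw [le_div_iff₀ hε, mul_comm, ← log_rpow (by linarith)]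
  calc log ((1 + y) ^ ε) ≤ log (1 + y ^ ε) := log_le_log (by positivity) hsub
    _ ≤ y ^ ε := by linarith [log_le_sub_one_of_pos (by positivity : 0 < 1 + y ^ ε)]

lemma integrableOn_rpow_mul_one_add_log_sq {p : ℝ} (hp : -1 < p) (s : ℝ) :
    IntegrableOn (fun u => u ^ p * (1 + log (1 + u⁻¹)) ^ 2) (Ioc 0 s) := by
  obtain ⟨ε, hε, hε₁, hpε⟩ : ∃ ε : ℝ, 0 < ε ∧ ε ≤ 1 ∧ -1 < p - 2 * ε :=
    ⟨min 1 ((p + 1) / 4), lt_min one_pos (by linarith), min_le_left _ _,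
      by linarith [min_le_right 1 ((p + 1) / 4)]⟩
  have hdom : IntegrableOn (fun u => 2 * u ^ p + 2 / ε ^ 2 * u ^ (p - 2 * ε)) (Ioc 0 s) :=
    (((intervalIntegrable_rpow' hp).const_mul 2).add
      ((intervalIntegrable_rpow' hpε).const_mul _)).1
  refine hdom.mono' (by fun_prop) ?_
  filter_upwards [ae_restrict_mem measurableSet_Ioc] with u ⟨hu, _⟩
  have hlog : log (1 + u⁻¹) ≤ u ^ (-ε) / ε := by
    simpa [inv_rpow hu.le, rpow_neg hu.le] using
      log_one_add_le_rpow_div (inv_nonneg.2 hu.le) hε hε₁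
  have hlog₀ : 0 ≤ log (1 + u⁻¹) := log_nonneg (by simp [hu.le])
  have hsq : (1 + log (1 + u⁻¹)) ^ 2 ≤ 2 + 2 * (u ^ (-ε) / ε) ^ 2 := by
    nlinarith [sq_nonneg (1 - log (1 + u⁻¹)), pow_le_pow_left₀ hlog₀ hlog 2]
  have hpow : u ^ p * (u ^ (-ε)) ^ 2 = u ^ (p - 2 * ε) := by
    rw [← rpow_natCast, ← rpow_mul hu.le, ← rpow_add hu]
    ring_nf
  rw [norm_of_nonneg (by positivity)]
  calc u ^ p * (1 + log (1 + u⁻¹)) ^ 2 ≤ u ^ p * (2 + 2 * (u ^ (-ε) / ε) ^ 2) := by gcongr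
    _ = 2 * u ^ p + 2 / ε ^ 2 * u ^ (p - 2 * ε) := by linear_combination (2 / ε ^ 2) * hpow

lemma integrableOn_add_rpow_mul_rpow_mul_one_add_log_sq {a c : ℝ} (ha : -1/2 < a)
    (hc : 0 ≤ c) (s : ℝ) :
    IntegrableOn (fun u => (c + u) ^ a * u ^ a * (1 + log (1 + u⁻¹)) ^ 2) (Ioc 0 s) := by
  have hdom := (integrableOn_rpow_mul_one_add_log_sq (p := 2 * a) (by linarith) s).add
    ((integrableOn_rpow_mul_one_add_log_sq (p := a) (by linarith) s).const_mul ((c + s) ^ a))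
  refine hdom.mono' (by fun_prop) ?_
  filter_upwards [ae_restrict_mem measurableSet_Ioc] with u ⟨hu, hus⟩
  have hcu : (c + u) ^ a ≤ u ^ a + (c + s) ^ a := by
    rcases le_total a 0 with h | h
    · linarith [rpow_le_rpow_of_nonpos hu (by linarith : u ≤ c + u) h,
        rpow_nonneg (by linarith : 0 ≤ c + s) a]
    · linarith [rpow_le_rpow (by linarith) (by linarith : c + u ≤ c + s) h,
        rpow_nonneg hu.le a]
  rw [norm_of_nonneg (by positivity)]
  calc (c + u) ^ a * u ^ a * (1 + log (1 + u⁻¹)) ^ 2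
      ≤ (u ^ a + (c + s) ^ a) * u ^ a * (1 + log (1 + u⁻¹)) ^ 2 := by gcongr
    _ = u ^ (2 * a) * (1 + log (1 + u⁻¹)) ^ 2
          + (c + s) ^ a * (u ^ a * (1 + log (1 + u⁻¹)) ^ 2) := by
      rw [two_mul, rpow_add hu]; ring

lemma log_one_add_div_le_log_mul {x u : ℝ} (hx : exp 1 ≤ x) (hu : 0 < u) :
    log (1 + x / u) ≤ log x * (1 + log (1 + u⁻¹)) := by
  have hx₁ : 1 ≤ x := le_trans (one_le_exp zero_le_one) hx
  have hlog : 1 ≤ log x := (le_log_iff_exp_le (by linarith)).2 hx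
  have hlog' : 0 ≤ log (1 + u⁻¹) := log_nonneg (by simp [hu.le])
  have hle : 1 + x / u ≤ x * (1 + u⁻¹) := by rw [mul_add, mul_one, div_eq_mul_inv]; linarith
  calc log (1 + x / u) ≤ log (x * (1 + u⁻¹)) := log_le_log (by positivity) hle
    _ = log x + log (1 + u⁻¹) := log_mul (by positivity) (by positivity)
    _ ≤ log x * (1 + log (1 + u⁻¹)) := by nlinarith

lemma tendsto_log_one_add_div_div_log {u : ℝ} (hu : 0 < u) :
    Tendsto (fun x => log (1 + x / u) / log x) atTop (𝓝 1) := by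
  have hdiff : Tendsto (fun x => log (1 + x / u) - log x) atTop (𝓝 (-log u)) := by
    have h := (tendsto_log_comp_add_sub_log u).sub_const (log u)
    rw [zero_sub] at h
    refine h.congr' ?_
    filter_upwards [eventually_gt_atTop 0] with x hx
    rw [one_add_div hu.ne', log_div (by positivity) hu.ne', add_comm u x]
    ring
  have h := (hdiff.div_atTop tendsto_log_atTop).const_add 1
  rw [add_zero] at h
  refine h.congr' ?_
  filter_upwards [eventually_gt_atTop 1] with x hx
  have := (log_pos hx).ne'
  field_simp
  ring

theorem tendsto_integral_mul_log_one_add_div_mul_log_div_log_sq {μ : Measure ℝ}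
    (hμ : ∀ᵐ u ∂μ, 0 < u) {c : ℝ} (hc : 0 ≤ c) {f : ℝ → ℝ} (hf : AEStronglyMeasurable f μ)
    (hfℓ : Integrable (fun u => f u * (1 + log (1 + u⁻¹)) ^ 2) μ) :
    Tendsto (fun x => (∫ u, f u * (log (1 + x / (c + u)) * log (1 + x / u)) ∂μ) / log x ^ 2)
      atTop (𝓝 (∫ u, f u ∂μ)) := by
  simp_rw [← MeasureTheory.integral_div]
  refine tendsto_integral_filter_of_dominated_convergence _ ?_ ?_ hfℓ.norm ?_
  · exact Eventually.of_forall fun x => by fun_prop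
  · filter_upwards [eventually_ge_atTop (exp 1)] with x hx
    filter_upwards [hμ] with u hu
    have hx₀ : 0 < x := (exp_pos 1).trans_le hx
    have hlogx : 0 < log x := one_pos.trans_le ((le_log_iff_exp_le hx₀).2 hx)
    have hA₀ : 0 ≤ log (1 + x / (c + u)) := log_nonneg (le_add_of_nonneg_right (by positivity))
    have hAB : log (1 + x / (c + u)) ≤ log (1 + x / u) :=
      log_le_log (by positivity) (by gcongr; linarith)
    have hB := log_one_add_div_le_log_mul hx hu
    rw [norm_div, norm_mul, norm_mul (f u), norm_of_nonneg (mul_nonneg hA₀ (hA₀.trans hAB)),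
      norm_of_nonneg (sq_nonneg _), norm_of_nonneg (sq_nonneg _), div_le_iff₀ (pow_pos hlogx 2)]
    calc ‖f u‖ * (log (1 + x / (c + u)) * log (1 + x / u))
        ≤ ‖f u‖ * (log x * (1 + log (1 + u⁻¹))) ^ 2 := by
          gcongr
          rw [sq]
          exact mul_le_mul (hAB.trans hB) hB (hA₀.trans hAB) ((hA₀.trans hAB).trans hB)
      _ = ‖f u‖ * (1 + log (1 + u⁻¹)) ^ 2 * log x ^ 2 := by ring
  · filter_upwards [hμ] with u hu
    have := ((tendsto_log_one_add_div_div_log (by linarith : 0 < c + u)).mul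
      (tendsto_log_one_add_div_div_log hu)).const_mul (f u)
    simp only [mul_one] at this
    refine this.congr fun x => ?_
    ring

lemma tendsto_integral_add_rpow_mul_rpow_mul_log_div_log_sq {a c s : ℝ} (ha : -1/2 < a)
    (hc : 0 ≤ c) (hs : 0 ≤ s) :
    Tendsto (fun x => (∫ u in 0..s, (c + u) ^ a * u ^ a *
        (log (1 + x / (c + u)) * log (1 + x / u))) / log x ^ 2)
      atTop (𝓝 (∫ u in 0..s, (c + u) ^ a * u ^ a)) := by
  simp only [integral_of_le hs]
  exact tendsto_integral_mul_log_one_add_div_mul_log_div_log_sq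
    ((ae_restrict_mem measurableSet_Ioc).mono fun u hu => hu.1) hc (by fun_prop)
    (integrableOn_add_rpow_mul_rpow_mul_one_add_log_sq ha hc s)

lemma logModKernel_div (H : ℝ) {x n : ℝ} (hx : 0 ≤ x) (hn : 0 ≤ n) :
    logModKernel H (x / n) =
      n ^ (-(H - 1/2)) * (x ^ (H - 1/2) * log (1 + n / x)) / Gamma (H + 1/2) := by
  rw [logModKernel, one_div_div, div_rpow hx hn, rpow_neg hn]
  ring

lemma integral_logModKernel_add_mul (H : ℝ) {c s n : ℝ} (hc : 0 ≤ c) (hs : 0 ≤ s) (hn : 0 < n) :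
    ∫ r in 0..s / n, logModKernel H (c / n + r) * logModKernel H r =
      (n ^ (2 * H) * Gamma (H + 1/2) ^ 2)⁻¹ * ∫ u in 0..s, (c + u) ^ (H - 1/2) * u ^ (H - 1/2) *
        (log (1 + n / (c + u)) * log (1 + n / u)) := by
  have hsub := inv_smul_integral_comp_div (a := 0) (b := s)
    (f := fun r => logModKernel H (c / n + r) * logModKernel H r) n
  rw [zero_div] at hsub
  rw [← hsub, smul_eq_mul, ← intervalIntegral.integral_const_mul,
    ← intervalIntegral.integral_const_mul]
  refine integral_congr fun u hu => ?_
  have hu₀ : 0 ≤ u := by rw [uIcc_of_le hs] at hu; exact hu.1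
  rw [← add_div, logModKernel_div H (add_nonneg hc hu₀) hn.le, logModKernel_div H hu₀ hn.le]
  have hpow : n⁻¹ * (n ^ (-(H - 1/2)) * n ^ (-(H - 1/2))) = (n ^ (2 * H))⁻¹ := by
    rw [← rpow_add hn, ← rpow_neg_one, ← rpow_add hn, ← rpow_neg hn.le]
    ring_nf
  rw [mul_inv, ← hpow]
  ring

lemma integral_rpow_mul_self_zero_one {a : ℝ} (ha : -1/2 < a) :
    ∫ u in (0:ℝ)..1, u ^ a * u ^ a = 1 / (2 * a + 1) := by
  rw [intervalIntegral.integral_congr_ae (g := fun u => u ^ (2 * a))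
    (.of_forall fun u hu => by
      rw [uIoc_of_le zero_le_one] at hu
      rw [two_mul, rpow_add hu.1])]
  rw [integral_rpow (.inl (by linarith)), one_rpow, zero_rpow (by linarith)]
  ring

/-- Limiting-kernel identification of Example 5.2: for the log-modulated
fractional kernel, with `λ(n) = (∫₀^{1/n} K(r)² dr)⁻¹`, the rescaled
covariance convolution converges to the covariance associated with
`K̄(t) = √(2H) t^{H−1/2}`. -/
theorem stmt_17 (H : ℝ) (hH : 0 < H) :
    ∀ s t : ℝ, 0 < s → s ≤ t →
      Filter.Tendsto (fun n : ℕ =>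
          (∫ r in (0:ℝ)..(1 / (n : ℝ)), (logModKernel H r) ^ 2)⁻¹ *
            ∫ r in (0:ℝ)..(s / (n : ℝ)),
              logModKernel H ((t - s) / (n : ℝ) + r) * logModKernel H r)
        Filter.atTop
        (nhds (2 * H * ∫ r in (0:ℝ)..s, (t - s + r) ^ (H - 1/2) * r ^ (H - 1/2))) := by
  intro s t hs hst
  have ha : -1/2 < H - 1/2 := by linarith
  have hnum := tendsto_integral_add_rpow_mul_rpow_mul_log_div_log_sq ha (sub_nonneg.2 hst) hs.le
  have hden := tendsto_integral_add_rpow_mul_rpow_mul_log_div_log_sq ha le_rfl zero_le_one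
  have hden_lim : ∫ u in (0:ℝ)..1, (0 + u) ^ (H - 1/2) * u ^ (H - 1/2) = 1 / (2 * H) := by
    rw [show 2 * H = 2 * (H - 1/2) + 1 by ring]
    simpa only [zero_add] using integral_rpow_mul_self_zero_one ha
  rw [hden_lim] at hden
  have hlim : (∫ u in (0:ℝ)..s, (t - s + u) ^ (H - 1/2) * u ^ (H - 1/2)) / (1 / (2 * H)) =
      2 * H * ∫ r in (0:ℝ)..s, (t - s + r) ^ (H - 1/2) * r ^ (H - 1/2) := by
    rw [div_div_eq_mul_div, div_one, mul_comm]
  rw [← hlim]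
  refine ((hnum.div hden (by positivity)).comp tendsto_natCast_atTop_atTop).congr' ?_
  filter_upwards [eventually_gt_atTop 1] with n hn
  have hn₀ : (0 : ℝ) < n := by exact_mod_cast Nat.zero_lt_of_lt hn
  have hlog : log n ^ 2 ≠ 0 := pow_ne_zero 2 (log_pos (by exact_mod_cast hn)).ne'
  have hsq : ∫ r in (0:ℝ)..1 / n, logModKernel H r ^ 2 =
      ∫ r in (0:ℝ)..1 / n, logModKernel H (0 / n + r) * logModKernel H r := by
    simp only [zero_div, zero_add, sq]
  rw [Function.comp_apply, Pi.div_apply, div_div_div_cancel_right₀ hlog, hsq,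
    integral_logModKernel_add_mul H le_rfl zero_le_one hn₀,
    integral_logModKernel_add_mul H (sub_nonneg.2 hst) hs.le hn₀, ← div_eq_inv_mul,
    mul_div_mul_left _ _ (by positivity)]
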